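/- For a positively oriented nondegenerate triangle, cot(β)·(v₁−v₃) − cot(γ)·(v₂−v₁) = J(v₃−v₂), where β and γ are the interior angles of the triangle at the vertices v₂ and v₃ respectively and cot θ := cos θ / sin θ. -/

import Mathlib

/-!
In the plane, `‖x‖ ‖y‖ cos ∠(x, y) = ⟪x, y⟫` and `‖x‖ ‖y‖ sin ∠(x, y) = |det(x, y)|` (Lagrange's
identity), so the cotangent of an angle of the triangle is the inner product of its two edges
divided by the doubled area `2A`, the same at every vertex. After multiplying through by `2A`
the identity becomes a polynomial identity in the coordinates of the vertices.
-/

noncomputable section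

/-- Determinant of two vectors in ℝ². -/
def det2 (a b : EuclideanSpace ℝ (Fin 2)) : ℝ := a 0 * b 1 - a 1 * b 0

/-- The 90° counter-clockwise rotation `J(x,y) = (−y,x)`. -/
def Jrot (a : EuclideanSpace ℝ (Fin 2)) : EuclideanSpace ℝ (Fin 2) := WithLp.toLp 2 ![-(a 1), a 0]

open InnerProductGeometry
open scoped RealInnerProductSpace

lemma inner_eq_fin_two (x y : EuclideanSpace ℝ (Fin 2)) :
    ⟪x, y⟫ = x 0 * y 0 + x 1 * y 1 := by
  simp [PiLp.inner_apply, Fin.sum_univ_two, mul_comm]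

lemma inner_self_mul_inner_self_sub_inner_sq (x y : EuclideanSpace ℝ (Fin 2)) :
    ⟪x, x⟫ * ⟪y, y⟫ - ⟪x, y⟫ * ⟪x, y⟫ = det2 x y ^ 2 := by
  simp only [inner_eq_fin_two, det2]
  ring

lemma sin_angle_mul_norm_mul_norm_eq_abs_det2 (x y : EuclideanSpace ℝ (Fin 2)) :
    Real.sin (angle x y) * (‖x‖ * ‖y‖) = |det2 x y| := by
  rw [sin_angle_mul_norm_mul_norm, inner_self_mul_inner_self_sub_inner_sq, Real.sqrt_sq_eq_abs]

/-- Also valid in the degenerate cases, where both sides are `0`. -/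
lemma cos_angle_div_sin_angle (x y : EuclideanSpace ℝ (Fin 2)) :
    Real.cos (angle x y) / Real.sin (angle x y) = ⟪x, y⟫ / |det2 x y| := by
  by_cases hxy : ‖x‖ * ‖y‖ = 0
  · have hinner : ⟪x, y⟫ = 0 := by
      rcases mul_eq_zero.1 hxy with h | h <;> simp [norm_eq_zero.1 h]
    rw [cos_angle, hxy, hinner]
    simp
  · have hsin : Real.sin (angle x y) = |det2 x y| / (‖x‖ * ‖y‖) :=
      eq_div_of_mul_eq hxy (sin_angle_mul_norm_mul_norm_eq_abs_det2 x y)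
    rw [cos_angle, hsin, div_div_div_cancel_right₀ hxy]

lemma det2_sub_sub_comm (p₁ p₂ p₃ : EuclideanSpace ℝ (Fin 2)) :
    det2 (p₁ - p₂) (p₃ - p₂) = -det2 (p₂ - p₁) (p₃ - p₁) := by
  simp only [det2, PiLp.sub_apply]
  ring

lemma det2_sub_sub_cyclic (p₁ p₂ p₃ : EuclideanSpace ℝ (Fin 2)) :
    det2 (p₃ - p₂) (p₁ - p₂) = det2 (p₂ - p₁) (p₃ - p₁) := by
  simp only [det2, PiLp.sub_apply]
  ring

lemma EuclideanGeometry.cos_angle_div_sin_angle_of_det2_pos {p₁ p₂ p₃ : EuclideanSpace ℝ (Fin 2)}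
    (h : 0 < det2 (p₂ - p₁) (p₃ - p₁)) :
    Real.cos (EuclideanGeometry.angle p₁ p₂ p₃) / Real.sin (EuclideanGeometry.angle p₁ p₂ p₃)
      = ⟪p₁ - p₂, p₃ - p₂⟫ / det2 (p₂ - p₁) (p₃ - p₁) := by
  rw [EuclideanGeometry.angle, vsub_eq_sub, vsub_eq_sub, cos_angle_div_sin_angle,
    det2_sub_sub_comm, abs_neg, abs_of_pos h]

lemma inner_smul_sub_inner_smul_eq_det2_smul_Jrot (p₁ p₂ p₃ : EuclideanSpace ℝ (Fin 2)) :
    ⟪p₁ - p₂, p₃ - p₂⟫ • (p₁ - p₃) - ⟪p₂ - p₃, p₁ - p₃⟫ • (p₂ - p₁)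
      = det2 (p₂ - p₁) (p₃ - p₁) • Jrot (p₃ - p₂) := by
  ext i
  fin_cases i <;>
    simp only [inner_eq_fin_two, det2, Jrot, PiLp.sub_apply, PiLp.smul_apply,
      smul_eq_mul, Fin.zero_eta, Fin.mk_one, Matrix.cons_val_zero, Matrix.cons_val_one,
      Matrix.cons_val_fin_one] <;>
    ring

/-- For a positively oriented nondegenerate triangle,
`cot(β)·(v₁−v₃) − cot(γ)·(v₂−v₁) = J(v₃−v₂)`, where `β`, `γ` are the interior
angles at `v₂`, `v₃`. -/
theorem cotangent_edge_identity
    (v₁ v₂ v₃ : EuclideanSpace ℝ (Fin 2))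
    (hA : 0 < det2 (v₂ - v₁) (v₃ - v₁))
    (β γ : ℝ)
    (hβ : β = EuclideanGeometry.angle v₁ v₂ v₃)
    (hγ : γ = EuclideanGeometry.angle v₂ v₃ v₁) :
    (Real.cos β / Real.sin β) • (v₁ - v₃) - (Real.cos γ / Real.sin γ) • (v₂ - v₁)
      = Jrot (v₃ - v₂) := by
  have hA' : 0 < det2 (v₃ - v₂) (v₁ - v₂) := by rwa [det2_sub_sub_cyclic]
  rw [hβ, hγ, EuclideanGeometry.cos_angle_div_sin_angle_of_det2_pos hA,
    EuclideanGeometry.cos_angle_div_sin_angle_of_det2_pos hA', det2_sub_sub_cyclic v₁ v₂ v₃,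
    div_eq_inv_mul, div_eq_inv_mul, mul_smul, mul_smul, ← smul_sub,
    inner_smul_sub_inner_smul_eq_det2_smul_Jrot, inv_smul_smul₀ hA.ne']
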